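/- arXiv:2303.02746 — 3 statements merged into one kernel-verified Lean document; each statement's English description precedes it below -/
import Mathlib

section
/- Suppose each objective f_i (i = 1, …, T) is M_f-relatively Lipschitz continuous and μ-relatively strongly convex w.r.t. h with μ > 0, and the constraint g is M_g-relatively Lipschitz continuous and μ-relatively strongly convex w.r.t. h. Set M = max(M_f, M_g) and ε = (M²/μ)·(1 + ln T)/T. If the switching mirror-descent algorithm with step sizes η_t = 1/(μ·t) performs exactly T productive steps and Regret_T ≥ 0, then there exists a constant C ∈ (2, 3) such that the number of non-productive steps satisfies T_J ≤ C·T, and moreover Regret_T ≤ (M²/μ)·(1 + ln((C+1)·T)), while g(x_t) ≤ ε at every productive step t. -/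
/-!
A mirror-descent step with step size `1 / (μ t)` on a relatively `M`-Lipschitz, relatively
`μ`-strongly convex `φ` satisfies
`φ x_t - φ x* ≤ μ (t - 1) V(x*, x_t) - μ t V(x*, x_{t+1}) + M² / (2 μ t)`,
so over all `N = T + T_J` steps the Bregman terms telescope and the total excess is at most
`M² / (2 μ) (1 + ln N)`. This total is the regret plus the excesses `g x_t - g x*` of the
non-productive steps, each larger than `ε` because `g x* ≤ 0`. As the regret is nonnegative,
`T_J ε < M² / (2 μ) (1 + ln (T + T_J))`, which for `ε = M² / μ (1 + ln T) / T` forces `T_J < T`.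
Hence `C = 5 / 2` works, and the regret is at most `M² / (2 μ) (1 + ln (2 T))`.
-/

open scoped RealInnerProductSpace
open Finset

/-- The Bregman divergence `V(y,x) = h(y) − h(x) − ⟨∇h(x), y − x⟩`. -/
noncomputable def breg {E : Type*} [NormedAddCommGroup E] [InnerProductSpace ℝ E]
    [CompleteSpace E] (h : E → ℝ) (y x : E) : ℝ :=
  h y - h x - ⟪gradient h x, y - x⟫

/-- `f` is `M`-relatively Lipschitz continuous w.r.t. the prox-function `h` on `Q`. -/
noncomputable def RelLipschitz {E : Type*} [NormedAddCommGroup E] [InnerProductSpace ℝ E]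
    [CompleteSpace E] (h : E → ℝ) (Q : Set E) (M : ℝ) (f : E → ℝ) : Prop :=
  ∀ x ∈ Q, ∀ y ∈ Q, 0 ≤ ⟪gradient f x, y - x⟫ + M * Real.sqrt (2 * breg h y x)

/-- `f` is `μ`-relatively strongly convex w.r.t. the prox-function `h` on `Q`. -/
noncomputable def RelStrongConvex {E : Type*} [NormedAddCommGroup E] [InnerProductSpace ℝ E]
    [CompleteSpace E] (h : E → ℝ) (Q : Set E) (μ : ℝ) (f : E → ℝ) : Prop :=
  ∀ x ∈ Q, ∀ y ∈ Q, f y + ⟪gradient f y, x - y⟫ + μ * breg h x y ≤ f x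

/-- One mirror-descent step from `x` with step size `η` in the direction `v`: there is
`y` with `∇h(y) = ∇h(x) − η·v`, and the next iterate `x'` is the Bregman projection of
`y` onto `Q`. -/
noncomputable def MDStepV {E : Type*} [NormedAddCommGroup E] [InnerProductSpace ℝ E]
    [CompleteSpace E] (h : E → ℝ) (Q : Set E) (η : ℝ) (v : E) (x x' : E) : Prop :=
  ∃ y : E, gradient h y = gradient h x - η • v ∧ x' ∈ Q ∧
    IsMinOn (fun z => breg h z y) Q x'

section Bregman

variable {E : Type*} [NormedAddCommGroup E] [InnerProductSpace ℝ E] [CompleteSpace E]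

theorem ConvexOn.add_inner_gradient_le {ψ : E → ℝ} (hψ : ConvexOn ℝ Set.univ ψ) {x : E}
    (hdiff : DifferentiableAt ℝ ψ x) (y : E) : ψ x + ⟪gradient ψ x, y - x⟫ ≤ ψ y := by
  have hline : HasDerivAt (ψ ∘ AffineMap.lineMap x y) ⟪gradient ψ x, y - x⟫ (0 : ℝ) := by
    simpa [inner_gradient_left] using hdiff.hasFDerivAt.comp_hasDerivAt_of_eq (0 : ℝ)
      AffineMap.hasDerivAt_lineMap (AffineMap.lineMap_apply_zero x y).symm
  have hslope := (hψ.comp_affineMap (AffineMap.lineMap x y)).le_slope_of_hasDerivAt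
    (Set.mem_univ 0) (Set.mem_univ 1) one_pos hline
  simp only [slope_def_field, Function.comp_apply, AffineMap.lineMap_apply_one,
    AffineMap.lineMap_apply_zero, sub_zero, div_one] at hslope
  linarith

theorem breg_nonneg {h : E → ℝ} (hconv : ConvexOn ℝ Set.univ h) {x : E}
    (hdiff : DifferentiableAt ℝ h x) (y : E) : 0 ≤ breg h y x := by
  have := hconv.add_inner_gradient_le hdiff y
  rw [breg]
  linarith

theorem inner_gradient_sub_gradient_eq_breg (h : E → ℝ) (u x x' : E) :
    ⟪gradient h x' - gradient h x, u - x'⟫ = breg h u x - breg h u x' - breg h x' x := by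
  simp only [breg, inner_sub_left, inner_sub_right]
  ring

theorem hasFDerivAt_breg_left {h : E → ℝ} {z : E} (hdiff : DifferentiableAt ℝ h z) (y : E) :
    HasFDerivAt (fun w => breg h w y) (fderiv ℝ h z - innerSL ℝ (gradient h y)) z := by
  have hinner : HasFDerivAt (fun w => ⟪gradient h y, w - y⟫) (innerSL ℝ (gradient h y)) z :=
    (innerSL ℝ (gradient h y)).hasFDerivAt.comp z ((hasFDerivAt_id z).sub_const y)
  exact (hdiff.hasFDerivAt.sub_const (h y)).sub hinner

theorem IsMinOn.inner_gradient_sub_gradient_nonneg {h : E → ℝ} {Q : Set E} (hQ : Convex ℝ Q)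
    {x' y u : E} (hdiff : DifferentiableAt ℝ h x') (hx' : x' ∈ Q) (hu : u ∈ Q)
    (hmin : IsMinOn (fun z => breg h z y) Q x') :
    0 ≤ ⟪gradient h x' - gradient h y, u - x'⟫ := by
  have := hmin.localize.hasFDerivWithinAt_nonneg (hasFDerivAt_breg_left hdiff y).hasFDerivWithinAt
    (sub_mem_posTangentConeAt_of_segment_subset (hQ.segment_subset hx' hu))
  simpa [inner_gradient_left, inner_sub_left] using this

end Bregman

section MirrorStep

variable {E : Type*} [NormedAddCommGroup E] [InnerProductSpace ℝ E] [CompleteSpace E]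
  {h : E → ℝ} {Q : Set E}

theorem MDStepV.mem {η : ℝ} {v x x' : E} (hstep : MDStepV h Q η v x x') : x' ∈ Q :=
  hstep.choose_spec.2.1

theorem MDStepV.mul_inner_le {η : ℝ} {v x x' u : E} (hQ : Convex ℝ Q)
    (hdiff : Differentiable ℝ h) (hu : u ∈ Q) (hstep : MDStepV h Q η v x x') :
    η * ⟪v, x' - u⟫ ≤ breg h u x - breg h u x' - breg h x' x := by
  obtain ⟨y, hy, hx', hmin⟩ := hstep
  have hvar := hmin.inner_gradient_sub_gradient_nonneg hQ (hdiff x') hx' hu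
  have hsplit : gradient h x' - gradient h y = (gradient h x' - gradient h x) + η • v := by
    rw [hy]; abel
  rw [hsplit, inner_add_left, inner_gradient_sub_gradient_eq_breg, real_inner_smul_left,
    ← neg_sub x' u, inner_neg_right] at hvar
  linarith

theorem RelLipschitz.mono {M M' : ℝ} {f : E → ℝ} (hf : RelLipschitz h Q M f) (hMM' : M ≤ M') :
    RelLipschitz h Q M' f := fun x hx y hy =>
  (hf x hx y hy).trans (by gcongr)

theorem RelLipschitz.mul_inner_sub_le {M η : ℝ} {f : E → ℝ} (hf : RelLipschitz h Q M f)
    (hconv : ConvexOn ℝ Set.univ h) (hdiff : Differentiable ℝ h) (hη : 0 ≤ η)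
    {x x' : E} (hx : x ∈ Q) (hx' : x' ∈ Q) :
    η * ⟪gradient f x, x - x'⟫ ≤ η ^ 2 * M ^ 2 / 2 + breg h x' x := by
  set r := Real.sqrt (2 * breg h x' x)
  have hr : r ^ 2 = 2 * breg h x' x := Real.sq_sqrt (by linarith [breg_nonneg hconv (hdiff x) x'])
  have hlip : ⟪gradient f x, x - x'⟫ ≤ M * r := by
    have := hf x hx x' hx'
    rw [← neg_sub x x', inner_neg_right] at this
    linarith
  -- `η M r ≤ (η M)² / 2 + r² / 2`
  nlinarith [mul_le_mul_of_nonneg_left hlip hη, sq_nonneg (η * M - r)]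

theorem MDStepV.mul_sub_le {φ : E → ℝ} {M μ η : ℝ} (hQ : Convex ℝ Q)
    (hconv : ConvexOn ℝ Set.univ h) (hdiff : Differentiable ℝ h) (hη : 0 ≤ η)
    (hLip : RelLipschitz h Q M φ) (hSC : RelStrongConvex h Q μ φ) {x x' u : E}
    (hx : x ∈ Q) (hu : u ∈ Q) (hstep : MDStepV h Q η (gradient φ x) x x') :
    η * (φ x - φ u) ≤ (1 - η * μ) * breg h u x - breg h u x' + η ^ 2 * M ^ 2 / 2 := by
  have hproj := hstep.mul_inner_le hQ hdiff hu
  have hlip := hLip.mul_inner_sub_le hconv hdiff hη hx hstep.mem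
  have hsc := mul_le_mul_of_nonneg_left (hSC u hu x hx) hη
  have hsplit : ⟪gradient φ x, u - x⟫ = -(⟪gradient φ x, x - x'⟫ + ⟪gradient φ x, x' - u⟫) := by
    rw [← inner_add_right, ← inner_neg_right]; congr 1; abel
  rw [hsplit] at hsc
  linarith

theorem MDStepV.sub_le_of_stepSize_inv {φ : E → ℝ} {M μ t : ℝ} (hμ : 0 < μ) (ht : 0 < t)
    (hQ : Convex ℝ Q) (hconv : ConvexOn ℝ Set.univ h) (hdiff : Differentiable ℝ h)
    (hLip : RelLipschitz h Q M φ) (hSC : RelStrongConvex h Q μ φ) {x x' u : E}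
    (hx : x ∈ Q) (hu : u ∈ Q) (hstep : MDStepV h Q (1 / (μ * t)) (gradient φ x) x x') :
    φ x - φ u ≤ μ * (t - 1) * breg h u x - μ * t * breg h u x' + M ^ 2 / (2 * μ * t) := by
  calc φ x - φ u = μ * t * (1 / (μ * t) * (φ x - φ u)) := by field_simp
    _ ≤ μ * t * ((1 - 1 / (μ * t) * μ) * breg h u x - breg h u x' +
        (1 / (μ * t)) ^ 2 * M ^ 2 / 2) := by
      gcongr
      exact hstep.mul_sub_le hQ hconv hdiff (by positivity) hLip hSC hx hu
    _ = μ * (t - 1) * breg h u x - μ * t * breg h u x' + M ^ 2 / (2 * μ * t) := by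
      field_simp

end MirrorStep

theorem sum_Icc_inv_le_one_add_log (N : ℕ) : ∑ t ∈ Icc 1 N, ((t : ℝ))⁻¹ ≤ 1 + Real.log N := by
  have := harmonic_le_one_add_log N
  rw [harmonic_eq_sum_Icc] at this
  push_cast at this
  exact this

section MirrorDescentRun

variable {E : Type*} [NormedAddCommGroup E] [InnerProductSpace ℝ E] [CompleteSpace E]
  {h : E → ℝ} {Q : Set E}

theorem sum_sub_le_of_mirrorDescent {M μ : ℝ} (hμ : 0 < μ) (hQ : Convex ℝ Q)
    (hconv : ConvexOn ℝ Set.univ h) (hdiff : Differentiable ℝ h) (φ : ℕ → E → ℝ)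
    (hLip : ∀ t, RelLipschitz h Q M (φ t)) (hSC : ∀ t, RelStrongConvex h Q μ (φ t))
    (x : ℕ → E) (hx1 : x 1 ∈ Q) (N : ℕ)
    (hstep : ∀ t ∈ Icc 1 N, MDStepV h Q (1 / (μ * t)) (gradient (φ t) (x t)) (x t) (x (t + 1)))
    {u : E} (hu : u ∈ Q) :
    ∑ t ∈ Icc 1 N, (φ t (x t) - φ t u) ≤ M ^ 2 / (2 * μ) * (1 + Real.log N) := by
  have hxQ : ∀ t ∈ Icc 1 N, x t ∈ Q := by
    intro t ht
    obtain ⟨ht1, htN⟩ := mem_Icc.1 ht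
    rcases ht1.eq_or_lt with rfl | hlt
    · exact hx1
    · have hmem := (hstep (t - 1) (mem_Icc.2 ⟨by omega, by omega⟩)).mem
      rwa [Nat.sub_add_cancel hlt.le] at hmem
  set d : ℕ → ℝ := fun t => μ * ((t : ℝ) - 1) * breg h u (x t)
  have hone_step : ∀ t ∈ Icc 1 N,
      φ t (x t) - φ t u ≤ d t - d (t + 1) + M ^ 2 / (2 * μ) * (t : ℝ)⁻¹ := by
    intro t ht
    have := (hstep t ht).sub_le_of_stepSize_inv hμ (Nat.cast_pos.2 (mem_Icc.1 ht).1) hQ hconv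
      hdiff (hLip t) (hSC t) (hxQ t ht) hu
    simp only [d, Nat.cast_add, Nat.cast_one, add_sub_cancel_right]
    convert this using 2
    field_simp
  have hdN : 0 ≤ d (N + 1) := by
    simp only [d, Nat.cast_add, Nat.cast_one, add_sub_cancel_right]
    exact mul_nonneg (mul_nonneg hμ.le N.cast_nonneg) (breg_nonneg hconv (hdiff _) u)
  have htelescope : ∑ t ∈ Icc 1 N, (d t - d (t + 1)) = d 1 - d (N + 1) := by
    rw [← Ico_add_one_right_eq_Icc, ← neg_sub (d (N + 1)),
      ← sum_Ico_sub (f := d) (by omega : 1 ≤ N + 1), ← sum_neg_distrib]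
    simp only [neg_sub]
  calc ∑ t ∈ Icc 1 N, (φ t (x t) - φ t u)
      ≤ ∑ t ∈ Icc 1 N, (d t - d (t + 1) + M ^ 2 / (2 * μ) * (t : ℝ)⁻¹) := sum_le_sum hone_step
    _ = d 1 - d (N + 1) + M ^ 2 / (2 * μ) * ∑ t ∈ Icc 1 N, (t : ℝ)⁻¹ := by
      rw [sum_add_distrib, ← mul_sum, htelescope]
    _ ≤ M ^ 2 / (2 * μ) * (1 + Real.log N) := by
      have hd1 : d 1 = 0 := by simp [d]
      have hharmonic := sum_Icc_inv_le_one_add_log N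
      nlinarith [div_nonneg (sq_nonneg M) (by positivity : 0 ≤ 2 * μ)]

end MirrorDescentRun

theorem lt_of_mul_lt_half_one_add_log {A T J : ℝ} (hA : 0 ≤ A) (hT : 1 ≤ T) (hJ : 0 ≤ J)
    (h : J * (A * ((1 + Real.log T) / T)) < A / 2 * (1 + Real.log (T + J))) : J < T := by
  have hT0 : 0 < T := by linarith
  have hA0 : 0 < A := hA.lt_of_ne (by rintro rfl; simp at h)
  have hlog : Real.log (T + J) ≤ Real.log T + J / T := by
    rw [show T + J = T * (1 + J / T) by field_simp, Real.log_mul hT0.ne' (by positivity)]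
    linarith [Real.log_le_sub_one_of_pos (show 0 < 1 + J / T by positivity)]
  have hlogT := Real.log_nonneg hT
  set r := J / T
  have hr : J * ((1 + Real.log T) / T) = r * (1 + Real.log T) := by simp only [r]; ring
  rw [← mul_assoc, mul_comm J A, mul_assoc, hr] at h
  have h' : r * (1 + Real.log T) < (1 + Real.log T + r) / 2 := by nlinarith
  have hr1 : r < 1 := by nlinarith
  simpa [r, div_lt_one hT0] using hr1

theorem half_mul_one_add_log_le {A N K : ℝ} (hA : 0 ≤ A) (hN : 1 ≤ N) (hNK : N ≤ K) :
    A / 2 * (1 + Real.log N) ≤ A * (1 + Real.log K) := by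
  have hlogN := Real.log_nonneg hN
  have hlog := Real.log_le_log (by linarith) hNK
  nlinarith

section Switching

variable {E : Type*} {T : ℕ} {σ : Fin T → ℕ} {f : Fin T → E → ℝ} {g : E → ℝ}

/-- The function stepped on at time `t` by a switching run whose `i`-th productive step is
at time `σ i`. -/
noncomputable def switchedObjective (σ : Fin T → ℕ) (f : Fin T → E → ℝ) (g : E → ℝ) (t : ℕ) :
    E → ℝ :=
  open Classical in if ht : ∃ i, σ i = t then f ht.choose else g

theorem switchedObjective_apply (hσ : Function.Injective σ) (i : Fin T) :
    switchedObjective σ f g (σ i) = f i := by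
  have ht : ∃ j, σ j = σ i := ⟨i, rfl⟩
  rw [switchedObjective, dif_pos ht, hσ ht.choose_spec]

theorem switchedObjective_of_not_exists {t : ℕ} (ht : ¬ ∃ i, σ i = t) :
    switchedObjective σ f g t = g := by
  rw [switchedObjective, dif_neg ht]

theorem switchedObjective_mem {S : Set (E → ℝ)} (hf : ∀ i, f i ∈ S) (hg : g ∈ S) (t : ℕ) :
    switchedObjective σ f g t ∈ S := by
  unfold switchedObjective
  split_ifs
  exacts [hf _, hg]

theorem sum_switchedObjective_sub (hσ : Function.Injective σ) {s : Finset ℕ}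
    (hs : ∀ i, σ i ∈ s) (x : ℕ → E) (u : E) :
    ∑ t ∈ s, (switchedObjective σ f g t (x t) - switchedObjective σ f g t u) =
      (∑ i, f i (x (σ i)) - ∑ i, f i u) + ∑ t ∈ s \ univ.image σ, (g (x t) - g u) := by
  have hsub : univ.image σ ⊆ s := by simpa [image_subset_iff] using hs
  rw [← sum_sdiff hsub, sum_image fun i _ j _ hij => hσ hij, add_comm, ← sum_sub_distrib]
  congr 1
  · exact sum_congr rfl fun i _ => by rw [switchedObjective_apply hσ]
  · refine sum_congr rfl fun t ht => ?_
    have hnot : ¬ ∃ i, σ i = t := by simpa using (mem_sdiff.1 ht).2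
    rw [switchedObjective_of_not_exists hnot]

theorem card_Icc_sdiff_image {TJ : ℕ} (hσ : Function.Injective σ)
    (hs : ∀ i, σ i ∈ Icc 1 (T + TJ)) : #(Icc 1 (T + TJ) \ univ.image σ) = TJ := by
  rw [card_sdiff_of_subset (by simpa [image_subset_iff] using hs), Nat.card_Icc,
    card_image_of_injective _ hσ, card_univ, Fintype.card_fin]
  omega

theorem mdStepV_switchedObjective [NormedAddCommGroup E] [InnerProductSpace ℝ E]
    [CompleteSpace E] {h : E → ℝ} {Q : Set E} {η : ℕ → ℝ} {x : ℕ → E} {s : Finset ℕ}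
    (hσ : Function.Injective σ)
    (hstepP : ∀ i, MDStepV h Q (η (σ i)) (gradient (f i) (x (σ i))) (x (σ i)) (x (σ i + 1)))
    (hstepN : ∀ t ∈ s, (¬ ∃ i, σ i = t) →
      MDStepV h Q (η t) (gradient g (x t)) (x t) (x (t + 1))) :
    ∀ t ∈ s, MDStepV h Q (η t) (gradient (switchedObjective σ f g t) (x t)) (x t) (x (t + 1)) := by
  intro t ht
  by_cases hprod : ∃ i, σ i = t
  · obtain ⟨i, rfl⟩ := hprod
    rw [switchedObjective_apply hσ]
    exact hstepP i
  · rw [switchedObjective_of_not_exists hprod]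
    exact hstepN t ht hprod

end Switching

theorem switching_mirror_descent_regret_general
    {E : Type*} [NormedAddCommGroup E] [InnerProductSpace ℝ E] [FiniteDimensional ℝ E]
    (Q : Set E) (hQconv : Convex ℝ Q)
    (h : E → ℝ) (hdiff : Differentiable ℝ h) (hconv : ConvexOn ℝ Set.univ h)
    (T TJ : ℕ) (hT : 0 < T)
    (f : Fin T → E → ℝ) (g : E → ℝ)
    (Mf Mg μ : ℝ) (hμ : 0 < μ)
    (hfLip : ∀ i, RelLipschitz h Q Mf (f i)) (hgLip : RelLipschitz h Q Mg g)
    (hfSC : ∀ i, RelStrongConvex h Q μ (f i)) (hgSC : RelStrongConvex h Q μ g)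
    (M ε : ℝ) (hM : M = max Mf Mg)
    (hε : ε = M ^ 2 / μ * ((1 + Real.log T) / T))
    -- the iterates and the run of the switching algorithm:
    (x : ℕ → E) (hx1 : x 1 ∈ Q)
    (σ : Fin T → ℕ) (hσmono : StrictMono σ)
    (hσrange : ∀ i, σ i ∈ Finset.Icc 1 (T + TJ))
    (hproductive : ∀ t ∈ Finset.Icc 1 (T + TJ), (g (x t) ≤ ε ↔ ∃ i, σ i = t))
    (hstepP : ∀ i : Fin T,
      MDStepV h Q (1 / (μ * σ i)) (gradient (f i) (x (σ i))) (x (σ i)) (x (σ i + 1)))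
    (hstepN : ∀ t ∈ Finset.Icc 1 (T + TJ), (¬ ∃ i, σ i = t) →
      MDStepV h Q (1 / (μ * t)) (gradient g (x t)) (x t) (x (t + 1)))
    -- the constrained minimizer x*:
    (xs : E) (hxsQ : xs ∈ Q) (hxsg : g xs ≤ 0)
    -- nonnegative regret:
    (hReg : 0 ≤ ∑ i, f i (x (σ i)) - ∑ i, f i xs) :
    (∀ i, g (x (σ i)) ≤ ε) ∧
    ∃ C : ℝ, 2 < C ∧ C < 3 ∧ (TJ : ℝ) ≤ C * T ∧
      ∑ i, f i (x (σ i)) - ∑ i, f i xs ≤ M ^ 2 / μ * (1 + Real.log ((C + 1) * T)) := by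
  have hrun := sum_sub_le_of_mirrorDescent hμ hQconv hconv hdiff (switchedObjective σ f g)
    (switchedObjective_mem (S := {φ | RelLipschitz h Q M φ})
      (fun i => (hfLip i).mono (hM ▸ le_max_left _ _)) (hgLip.mono (hM ▸ le_max_right _ _)))
    (switchedObjective_mem (S := {φ | RelStrongConvex h Q μ φ}) hfSC hgSC) x hx1 (T + TJ)
    (mdStepV_switchedObjective (η := fun t => 1 / (μ * t)) hσmono.injective hstepP hstepN) hxsQ
  rw [sum_switchedObjective_sub hσmono.injective hσrange] at hrun
  set J := Icc 1 (T + TJ) \ univ.image σ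
  have hcard : #J = TJ := card_Icc_sdiff_image hσmono.injective hσrange
  have hJε : ∀ t ∈ J, ε < g (x t) - g xs := by
    intro t ht
    obtain ⟨htI, htσ⟩ := mem_sdiff.1 ht
    have := (hproductive t htI).not.2 (by simpa using htσ)
    linarith
  have hTpos : (1 : ℝ) ≤ T := Nat.one_le_cast.2 hT
  have hε0 : 0 ≤ ε := hε ▸ by have := Real.log_nonneg hTpos; positivity
  rw [show M ^ 2 / (2 * μ) = M ^ 2 / μ / 2 by ring, Nat.cast_add] at hrun
  have hTJ : (TJ : ℝ) ≤ T := by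
    rcases TJ.eq_zero_or_pos with h0 | hpos
    · simp [h0]
    have hlt := sum_lt_sum_of_nonempty (card_pos.1 (hcard ▸ hpos)) hJε
    rw [sum_const, hcard, nsmul_eq_mul] at hlt
    exact (lt_of_mul_lt_half_one_add_log (A := M ^ 2 / μ) (by positivity) hTpos TJ.cast_nonneg
      (by rw [← hε]; linarith)).le
  refine ⟨fun i => (hproductive _ (hσrange i)).2 ⟨i, rfl⟩, 5 / 2, by norm_num, by norm_num,
    by linarith, ?_⟩
  have hJ0 : 0 ≤ ∑ t ∈ J, (g (x t) - g xs) := sum_nonneg fun t ht => hε0.trans (hJε t ht).le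
  calc ∑ i, f i (x (σ i)) - ∑ i, f i xs ≤ M ^ 2 / μ / 2 * (1 + Real.log (T + TJ)) := by linarith
    _ ≤ M ^ 2 / μ * (1 + Real.log ((5 / 2 + 1) * T)) :=
      half_mul_one_add_log_le (by positivity) (by linarith [TJ.cast_nonneg (α := ℝ)]) (by linarith)

/-- Theorem 1 (switching Mirror Descent for relatively Lipschitz-continuous and relatively
strongly convex constrained online optimization): with `η_t = 1/(μ·t)` and
`ε = (M²/μ)·(1 + ln T)/T`, if the run makes exactly `T` productive steps (the `i`-th at
step index `σ i`, using objective `f i`) and `T_J` non-productive steps and the regret is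
nonnegative, then `g(x_t) ≤ ε` at every productive step, and there is a constant
`C ∈ (2, 3)` with `T_J ≤ C·T` and `Regret_T ≤ (M²/μ)·(1 + ln((C+1)·T))`. -/
theorem switching_mirror_descent_regret
    {E : Type*} [NormedAddCommGroup E] [InnerProductSpace ℝ E] [FiniteDimensional ℝ E]
    (Q : Set E) (hQne : Q.Nonempty) (hQclosed : IsClosed Q) (hQconv : Convex ℝ Q)
    (h : E → ℝ) (hdiff : Differentiable ℝ h) (hconv : ConvexOn ℝ Set.univ h)
    (T TJ : ℕ) (hT : 0 < T)
    (f : Fin T → E → ℝ) (g : E → ℝ)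
    (hfdiff : ∀ i, Differentiable ℝ (f i)) (hgdiff : Differentiable ℝ g)
    (hfconv : ∀ i, ConvexOn ℝ Set.univ (f i)) (hgconv : ConvexOn ℝ Set.univ g)
    (Mf Mg μ : ℝ) (hμ : 0 < μ)
    (hfLip : ∀ i, RelLipschitz h Q Mf (f i)) (hgLip : RelLipschitz h Q Mg g)
    (hfSC : ∀ i, RelStrongConvex h Q μ (f i)) (hgSC : RelStrongConvex h Q μ g)
    (M ε : ℝ) (hM : M = max Mf Mg)
    (hε : ε = M ^ 2 / μ * ((1 + Real.log T) / T))
    -- the iterates and the run of the switching algorithm: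
    (x : ℕ → E) (hx1 : x 1 ∈ Q)
    (σ : Fin T → ℕ) (hσmono : StrictMono σ)
    (hσrange : ∀ i, σ i ∈ Finset.Icc 1 (T + TJ))
    (hproductive : ∀ t ∈ Finset.Icc 1 (T + TJ), (g (x t) ≤ ε ↔ ∃ i, σ i = t))
    (hstepP : ∀ i : Fin T,
      MDStepV h Q (1 / (μ * σ i)) (gradient (f i) (x (σ i))) (x (σ i)) (x (σ i + 1)))
    (hstepN : ∀ t ∈ Finset.Icc 1 (T + TJ), (¬ ∃ i, σ i = t) →
      MDStepV h Q (1 / (μ * t)) (gradient g (x t)) (x t) (x (t + 1)))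
    -- the constrained minimizer x*:
    (xs : E) (hxsQ : xs ∈ Q) (hxsg : g xs ≤ 0)
    (hxsmin : ∀ y ∈ Q, g y ≤ 0 → ∑ i, f i xs ≤ ∑ i, f i y)
    -- nonnegative regret:
    (hReg : 0 ≤ ∑ i, f i (x (σ i)) - ∑ i, f i xs) :
    (∀ i, g (x (σ i)) ≤ ε) ∧
    ∃ C : ℝ, 2 < C ∧ C < 3 ∧ (TJ : ℝ) ≤ C * T ∧
      ∑ i, f i (x (σ i)) - ∑ i, f i xs ≤ M ^ 2 / μ * (1 + Real.log ((C + 1) * T)) :=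
  switching_mirror_descent_regret_general Q hQconv h hdiff hconv T TJ hT f g Mf Mg μ hμ hfLip hgLip
    hfSC hgSC M ε hM hε x hx1 σ hσmono hσrange hproductive hstepP hstepN xs hxsQ hxsg hReg
end

section
/- Let μ_1, …, μ_T ≥ 0 and C_1, …, C_T ≥ 0 be real numbers and write μ_{1:t} = Σ_{s=1}^t μ_s. For nonnegative reals λ_1, …, λ_T with λ_{1:t} = Σ_{s=1}^t λ_s define H_T(λ_1, …, λ_T) = λ_{1:T} + Σ_{t=1}^T C_t/(μ_{1:t} + λ_{1:t}) (with the convention that all denominators appearing are positive). If λ_1, …, λ_T ≥ 0 satisfy λ_t = C_t/(μ_{1:t} + λ_{1:t}) for every t = 1, …, T, then H_T(λ_1, …, λ_T) ≤ 2·inf H_T(λ_1*, …, λ_T*), where the infimum is taken over all nonnegative sequences λ_1*, …, λ_T* (for which all denominators are positive). -/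
open Finset

/-- Hazan–Rakhlin lemma: define
`H_T(λ) = λ_{1:T} + Σ_{t=1}^T C_t/(μ_{1:t} + λ_{1:t})`.
If the nonnegative sequence `λ` satisfies `λ_t = C_t/(μ_{1:t} + λ_{1:t})` for all `t`,
then `H_T(λ) ≤ 2·H_T(λ*)` for every admissible nonnegative sequence `λ*`,
i.e. `H_T(λ) ≤ 2·inf H_T(λ*)`. -/
theorem hazan_rakhlin_lemma
    (T : ℕ) (hT : 0 < T)
    (μ C : ℕ → ℝ)
    (hμ : ∀ t ∈ Finset.Icc 1 T, 0 ≤ μ t)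
    (hC : ∀ t ∈ Finset.Icc 1 T, 0 ≤ C t)
    (lam : ℕ → ℝ)
    (hlam0 : ∀ t ∈ Finset.Icc 1 T, 0 ≤ lam t)
    (hlampos : ∀ t ∈ Finset.Icc 1 T,
      0 < (∑ s ∈ Finset.Icc 1 t, μ s) + ∑ s ∈ Finset.Icc 1 t, lam s)
    (hfix : ∀ t ∈ Finset.Icc 1 T,
      lam t = C t / ((∑ s ∈ Finset.Icc 1 t, μ s) + ∑ s ∈ Finset.Icc 1 t, lam s)) :
    ∀ lamStar : ℕ → ℝ,
      (∀ t ∈ Finset.Icc 1 T, 0 ≤ lamStar t) →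
      (∀ t ∈ Finset.Icc 1 T,
        0 < (∑ s ∈ Finset.Icc 1 t, μ s) + ∑ s ∈ Finset.Icc 1 t, lamStar s) →
      (∑ s ∈ Finset.Icc 1 T, lam s) +
          ∑ t ∈ Finset.Icc 1 T, C t /
            ((∑ s ∈ Finset.Icc 1 t, μ s) + ∑ s ∈ Finset.Icc 1 t, lam s) ≤
        2 * ((∑ s ∈ Finset.Icc 1 T, lamStar s) +
          ∑ t ∈ Finset.Icc 1 T, C t /
            ((∑ s ∈ Finset.Icc 1 t, μ s) + ∑ s ∈ Finset.Icc 1 t, lamStar s)) := by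
  intro lamStar hstar0 hstarpos
  have key : ∀ t, t ≤ T →
      (∑ s ∈ Finset.Icc 1 t, lam s) ≤
        (∑ s ∈ Finset.Icc 1 t, lamStar s) +
          ∑ s ∈ Finset.Icc 1 t, C s /
            ((∑ u ∈ Finset.Icc 1 s, μ u) + ∑ u ∈ Finset.Icc 1 s, lamStar u) := by
    intro t
    induction t with
    | zero => simp
    | succ n ih =>
      intro hn
      have ihn := ih (Nat.le_of_succ_le hn)
      have hmem : n + 1 ∈ Finset.Icc 1 T := by
        simp only [Finset.mem_Icc]; omega
      have hsub : ∀ s ∈ Finset.Icc 1 (n+1), s ∈ Finset.Icc 1 T := by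
        intro s hs; simp only [Finset.mem_Icc] at hs ⊢; omega
      have hsumnn : 0 ≤ ∑ s ∈ Finset.Icc 1 (n+1), C s /
            ((∑ u ∈ Finset.Icc 1 s, μ u) + ∑ u ∈ Finset.Icc 1 s, lamStar u) := by
        apply Finset.sum_nonneg
        intro s hs
        exact div_nonneg (hC s (hsub s hs)) (le_of_lt (hstarpos s (hsub s hs)))
      by_cases hcase : (∑ s ∈ Finset.Icc 1 (n+1), lam s) ≤
          ∑ s ∈ Finset.Icc 1 (n+1), lamStar s
      · linarith
      · push_neg at hcase
        have hpos1 := hstarpos (n+1) hmem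
        have hlt : (∑ u ∈ Finset.Icc 1 (n+1), μ u) + ∑ s ∈ Finset.Icc 1 (n+1), lamStar s ≤
            (∑ u ∈ Finset.Icc 1 (n+1), μ u) + ∑ s ∈ Finset.Icc 1 (n+1), lam s := by
          linarith
        have hstep : lam (n+1) ≤ C (n+1) /
            ((∑ u ∈ Finset.Icc 1 (n+1), μ u) + ∑ u ∈ Finset.Icc 1 (n+1), lamStar u) := by
          rw [hfix (n+1) hmem]
          gcongr
          exact hC (n+1) hmem
        have hsplit1 : (∑ s ∈ Finset.Icc 1 (n+1), lam s) =
            (∑ s ∈ Finset.Icc 1 n, lam s) + lam (n+1) :=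
          Finset.sum_Icc_succ_top (by omega) lam
        have hsplit2 : (∑ s ∈ Finset.Icc 1 (n+1), lamStar s) =
            (∑ s ∈ Finset.Icc 1 n, lamStar s) + lamStar (n+1) :=
          Finset.sum_Icc_succ_top (by omega) lamStar
        have hsplit3 : (∑ s ∈ Finset.Icc 1 (n+1), C s /
              ((∑ u ∈ Finset.Icc 1 s, μ u) + ∑ u ∈ Finset.Icc 1 s, lamStar u)) =
            (∑ s ∈ Finset.Icc 1 n, C s /
              ((∑ u ∈ Finset.Icc 1 s, μ u) + ∑ u ∈ Finset.Icc 1 s, lamStar u)) +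
            C (n+1) / ((∑ u ∈ Finset.Icc 1 (n+1), μ u) + ∑ u ∈ Finset.Icc 1 (n+1), lamStar u) :=
          Finset.sum_Icc_succ_top (by omega) _
        have hstarnn := hstar0 (n+1) hmem
        rw [hsplit1, hsplit2, hsplit3]
        linarith
  have heq : (∑ t ∈ Finset.Icc 1 T, C t /
        ((∑ s ∈ Finset.Icc 1 t, μ s) + ∑ s ∈ Finset.Icc 1 t, lam s)) =
      ∑ t ∈ Finset.Icc 1 T, lam t := by
    apply Finset.sum_congr rfl
    intro t ht
    exact (hfix t ht).symm
  have := key T le_rfl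
  rw [heq]
  linarith
end

section
/- Let E be a finite-dimensional real inner product space, Q ⊆ E a nonempty convex set, h : E → ℝ a differentiable convex function with Bregman divergence V(y,x) = h(y) − h(x) − ⟨∇h(x), y − x⟩, and f : E → ℝ differentiable. Fix x ∈ Q, η > 0, M ≥ 0, μ ≥ 0, and suppose (i) ⟨∇f(x), x − z⟩ ≤ M·√(2·V(z,x)) for all z ∈ E (M-relative Lipschitz continuity at x) and (ii) f(u) ≥ f(x) + ⟨∇f(x), u − x⟩ + μ·V(u,x) for all u ∈ Q (μ-relative strong convexity). Let y ∈ E satisfy ∇h(y) = ∇h(x) − η·∇f(x) and let x⁺ ∈ Q minimize z ↦ V(z,y) over Q. Then for every u ∈ Q: f(x) − f(u) ≤ η·M² + (1/η)·(V(u,x) − V(u,x⁺)) − μ·V(u,x). -/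
open scoped RealInnerProductSpace

/-!
Let `g = ∇f(x)`. Relative strong convexity gives `f(x) − f(u) ≤ ⟨g, x − u⟩ − μ V(u,x)`; split
`⟨g, x − u⟩ = ⟨g, x − x⁺⟩ + ⟨g, x⁺ − u⟩`. Since `η g = ∇h(x) − ∇h(y)`, the optimality of the
Bregman projection `x⁺` and the three-point identity bound `η ⟨g, x⁺ − u⟩` by
`V(u,x) − V(u,x⁺) − V(x⁺,x)`, while relative Lipschitz continuity and Young's inequality bound
`⟨g, x − x⁺⟩` by `η M²/2 + V(x⁺,x)/η`; the two `V(x⁺,x)` terms cancel.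
-/

lemma ConvexOn.apply_sub_le_sub_of_hasFDerivAt {F : Type*} [NormedAddCommGroup F]
    [NormedSpace ℝ F] {s : Set F} {h : F → ℝ} {h' : F →L[ℝ] ℝ} {x z : F}
    (hh : ConvexOn ℝ s h) (hx : x ∈ s) (hz : z ∈ s) (hd : HasFDerivAt h h' x) :
    h' (z - x) ≤ h z - h x := by
  let L : ℝ →ᵃ[ℝ] F := AffineMap.lineMap x z
  have hL : HasDerivAt (fun t : ℝ => L t) (z - x) 0 := by
    simpa [L, AffineMap.lineMap_apply_module'] using
      ((hasDerivAt_id (0 : ℝ)).smul_const (z - x)).add_const x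
  have hLd : HasDerivAt (h ∘ L) (h' (z - x)) 0 := by
    have hd' : HasFDerivAt h h' (L 0) := by simpa [L] using hd
    exact hd'.comp_hasDerivAt 0 hL
  have := (hh.comp_affineMap L).le_slope_of_hasDerivAt (x := 0) (y := 1)
    (by simpa [L] using hx) (by simpa [L] using hz) zero_lt_one hLd
  simpa [slope_def_field, L] using this

lemma IsMinOn.inner_sub_nonneg_of_hasGradientAt {E : Type*} [NormedAddCommGroup E]
    [InnerProductSpace ℝ E] [CompleteSpace E] {s : Set E} {F : E → ℝ} {g a u : E}
    (hmin : IsMinOn F s a) (hs : Convex ℝ s) (ha : a ∈ s) (hu : u ∈ s)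
    (hF : HasGradientAt F g a) : 0 ≤ ⟪g, u - a⟫ := by
  simpa [InnerProductSpace.toDual_apply_apply] using
    hmin.localize.hasFDerivWithinAt_nonneg hF.hasFDerivAt.hasFDerivWithinAt
      (sub_mem_posTangentConeAt_of_segment_subset (hs.segment_subset ha hu))

lemma mul_sqrt_two_mul_le {M v η : ℝ} (hv : 0 ≤ v) (hη : 0 < η) :
    M * √(2 * v) ≤ η * M ^ 2 / 2 + v / η := by
  have hs : √(2 * v) ^ 2 = 2 * v := Real.sq_sqrt (by linarith)
  rw [show η * M ^ 2 / 2 + v / η = (η ^ 2 * M ^ 2 + 2 * v) / (2 * η) by field_simp,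
    le_div_iff₀ (by positivity)]
  nlinarith [sq_nonneg (η * M - √(2 * v))]

section Bregman

variable {E : Type*} [NormedAddCommGroup E] [InnerProductSpace ℝ E] [CompleteSpace E]
  {h : E → ℝ}

lemma breg_nonneg_s16 {s : Set E} {x z : E} (hh : ConvexOn ℝ s h) (hx : x ∈ s) (hz : z ∈ s)
    (hd : DifferentiableAt ℝ h x) : 0 ≤ breg h z x := by
  have := hh.apply_sub_le_sub_of_hasFDerivAt hx hz hd.hasGradientAt.hasFDerivAt
  rw [InnerProductSpace.toDual_apply_apply] at this
  unfold breg
  linarith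

lemma hasGradientAt_breg_left {g y z : E} (hd : HasGradientAt h g z) :
    HasGradientAt (breg h · y) (g - gradient h y) z := by
  rw [hasGradientAt_iff_hasFDerivAt, map_sub]
  have hlin := ((InnerProductSpace.toDual ℝ E (gradient h y)).hasFDerivAt (x := z)).sub_const
    ((InnerProductSpace.toDual ℝ E (gradient h y)) y)
  refine ((hd.hasFDerivAt.sub_const (h y)).sub hlin).congr_of_eventuallyEq
    (Filter.Eventually.of_forall fun w => ?_)
  simp [breg, inner_sub_right]

lemma breg_three_point (u x z : E) :
    ⟪gradient h x - gradient h z, z - u⟫ = breg h u x - breg h u z - breg h z x := by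
  simp only [breg, inner_sub_left, inner_sub_right]
  ring

lemma mirror_step_le {Q : Set E} (hQ : Convex ℝ Q) {x y xp u g : E} {η : ℝ}
    (hy : gradient h y = gradient h x - η • g) (hd : DifferentiableAt ℝ h xp)
    (hxpQ : xp ∈ Q) (hxp : IsMinOn (breg h · y) Q xp) (hu : u ∈ Q) :
    η * ⟪g, xp - u⟫ ≤ breg h u x - breg h u xp - breg h xp x := by
  have hopt : 0 ≤ ⟪gradient h xp - gradient h y, u - xp⟫ :=
    hxp.inner_sub_nonneg_of_hasGradientAt hQ hxpQ hu
      (hasGradientAt_breg_left hd.hasGradientAt)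
  have hsplit : η * ⟪g, xp - u⟫ = ⟪gradient h x - gradient h xp, xp - u⟫
      - ⟪gradient h xp - gradient h y, u - xp⟫ := by
    rw [hy, ← real_inner_smul_left]
    simp only [inner_sub_left, inner_sub_right]
    ring
  rw [hsplit, breg_three_point]
  linarith

end Bregman

theorem mirror_descent_one_step_general
    {E : Type*} [NormedAddCommGroup E] [InnerProductSpace ℝ E] [FiniteDimensional ℝ E]
    (Q : Set E) (hQconv : Convex ℝ Q)
    (h : E → ℝ) (hdiff : Differentiable ℝ h) (hconv : ConvexOn ℝ Set.univ h)
    (f : E → ℝ)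
    (x : E) (η M μ : ℝ) (hη : 0 < η)
    (hLip : ∀ z : E, ⟪gradient f x, x - z⟫ ≤ M * Real.sqrt (2 * breg h z x))
    (hSC : ∀ u ∈ Q, f x + ⟪gradient f x, u - x⟫ + μ * breg h u x ≤ f u)
    (y : E) (hy : gradient h y = gradient h x - η • gradient f x)
    (xp : E) (hxpQ : xp ∈ Q) (hxp : IsMinOn (fun z => breg h z y) Q xp) :
    ∀ u ∈ Q, f x - f u ≤ η * M ^ 2 + (1 / η) * (breg h u x - breg h u xp) - μ * breg h u x := by
  intro u hu
  have hstep := mirror_step_le hQconv hy (hdiff xp) hxpQ hxp hu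
  have hV : 0 ≤ breg h xp x := breg_nonneg_s16 hconv trivial trivial (hdiff x)
  have hnear := (hLip xp).trans (mul_sqrt_two_mul_le hV hη)
  have hfar : ⟪gradient f x, xp - u⟫ ≤ (breg h u x - breg h u xp - breg h xp x) / η :=
    (le_div_iff₀' hη).mpr hstep
  have hsc := hSC u hu
  simp only [inner_sub_right] at hnear hfar hsc
  have hηM : 0 ≤ η * M ^ 2 := by positivity
  linarith [show (1 / η) * (breg h u x - breg h u xp) = (breg h u x - breg h u xp) / η by ring,
    show (breg h u x - breg h u xp - breg h xp x) / η
      = (breg h u x - breg h u xp) / η - breg h xp x / η by ring]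

/-- One-step mirror-descent inequality: if `x⁺` is the Bregman projection onto `Q` of the
point `y` with `∇h(y) = ∇h(x) − η·∇f(x)`, `f` is `M`-relatively Lipschitz continuous at `x`
and `μ`-relatively strongly convex, then for every `u ∈ Q`,
`f(x) − f(u) ≤ η·M² + (1/η)·(V(u,x) − V(u,x⁺)) − μ·V(u,x)`. -/
theorem mirror_descent_one_step
    {E : Type*} [NormedAddCommGroup E] [InnerProductSpace ℝ E] [FiniteDimensional ℝ E]
    (Q : Set E) (hQne : Q.Nonempty) (hQconv : Convex ℝ Q)
    (h : E → ℝ) (hdiff : Differentiable ℝ h) (hconv : ConvexOn ℝ Set.univ h)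
    (f : E → ℝ) (hfdiff : Differentiable ℝ f)
    (x : E) (hxQ : x ∈ Q) (η M μ : ℝ) (hη : 0 < η) (hM : 0 ≤ M) (hμ : 0 ≤ μ)
    (hLip : ∀ z : E, ⟪gradient f x, x - z⟫ ≤ M * Real.sqrt (2 * breg h z x))
    (hSC : ∀ u ∈ Q, f x + ⟪gradient f x, u - x⟫ + μ * breg h u x ≤ f u)
    (y : E) (hy : gradient h y = gradient h x - η • gradient f x)
    (xp : E) (hxpQ : xp ∈ Q) (hxp : IsMinOn (fun z => breg h z y) Q xp) :
    ∀ u ∈ Q, f x - f u ≤ η * M ^ 2 + (1 / η) * (breg h u x - breg h u xp) - μ * breg h u x :=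
  mirror_descent_one_step_general Q hQconv h hdiff hconv f x η M μ hη hLip hSC y hy xp hxpQ hxp
end
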